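/- The monoid M_n (n ≥ 1) is 0-simple: its only two-sided ideals are {0} and M_n itself. Equivalently, for every nonzero element w ∈ M_n, the ideal M_n w M_n equals M_n. -/

import Mathlib

inductive Letter | a | b | c | d | z
deriving DecidableEq

abbrev W := FreeMonoid Letter
def A : W := FreeMonoid.of .a
def B : W := FreeMonoid.of .b
def C : W := FreeMonoid.of .c
def D : W := FreeMonoid.of .d
def Z : W := FreeMonoid.of .z

/-- The defining relations of `M n`, with the zero realized by the letter `z`. -/
def relM (n : ℕ) : W → W → Prop := fun x y =>
  (x = A ^ n * B ∧ y = Z) ∨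
  (x = A * C ∧ y = 1) ∨ (x = D * B ∧ y = 1) ∨ (x = D * C ∧ y = 1) ∨
  (∃ k, 1 ≤ k ∧ k ≤ n - 1 ∧ x = D * A ^ k * B ∧ y = 1) ∨
  (∃ l : Letter, x = FreeMonoid.of l * Z ∧ y = Z) ∨
  (∃ l : Letter, x = Z * FreeMonoid.of l ∧ y = Z)

def Mcon (n : ℕ) : Con W := conGen (relM n)

/-- The monoid `M n = Mon⟨a,b,c,d : aⁿb=0, ac=1, db=1, dc=1, daᵏb=1 (1 ≤ k ≤ n-1)⟩`. -/
abbrev M (n : ℕ) := (Mcon n).Quotient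

/-!
Every element of `M n` is either `0` or of the form `p * q`, where `p` is a product of factors
`c` and `aᵏb` (`k < n`) and `q` is a word in `a` and `d`: left multiplication by a generator
preserves this shape or produces `0` (through `aⁿb = 0`). Since `d` cancels every factor of `p`
from the left (`dc = daᵏb = 1`) and `c` cancels every letter of `q` from the right
(`ac = dc = 1`), we get `d ^ |p| * w * c ^ |q| = 1` for every nonzero `w`.

That `0 ≠ 1` is seen in a representation by partial maps on stacks: `b` pushes a counter `0`,
`c` pushes a marker, `a` pops a marker or raises a counter (failing when it would reach `n`),
`d` pops anything, and `z` always fails.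
-/

namespace M

abbrev Stack := List (Option ℕ)

def stackStep (n : ℕ) : Letter → Stack → Option Stack
  | .a, none :: s => some s
  | .a, some k :: s => if k + 1 < n then some (some (k + 1) :: s) else none
  | .b, s => some (some 0 :: s)
  | .c, s => some (none :: s)
  | .d, _ :: s => some s
  | _, _ => none

def letterAct (n : ℕ) (l : Letter) : Function.End (Option Stack) :=
  fun s => s.bind (stackStep n l)

variable {n : ℕ}

lemma stackStep_z : stackStep n .z = fun _ => none := by
  funext s; cases s <;> rfl

lemma letterAct_mul_apply (l : Letter) (f : Function.End (Option Stack)) (s : Option Stack) :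
    (letterAct n l * f) s = (f s).bind (stackStep n l) := rfl

lemma letterAct_pow_apply_none (l : Letter) (m : ℕ) : (letterAct n l ^ m) none = none :=
  Function.iterate_fixed (f := letterAct n l) rfl m

lemma letterAct_a_pow_apply {k m : ℕ} (h : k + m < n) (s : Stack) :
    (letterAct n .a ^ m) (some (some k :: s)) = some (some (k + m) :: s) := by
  induction m with
  | zero => rfl
  | succ m ih =>
    rw [pow_succ', letterAct_mul_apply, ih (by omega)]
    simp only [Option.bind_some, stackStep, add_assoc, if_pos h]

lemma letterAct_a_mul_c : letterAct n .a * letterAct n .c = 1 := by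
  funext s; cases s <;> rfl

lemma letterAct_d_mul_c : letterAct n .d * letterAct n .c = 1 := by
  funext s; cases s <;> rfl

lemma letterAct_d_mul_a_pow_mul_b {k : ℕ} (hk : k < n) :
    letterAct n .d * letterAct n .a ^ k * letterAct n .b = 1 := by
  funext s
  cases s with
  | none => exact congrArg (Option.bind · _) (letterAct_pow_apply_none _ k)
  | some s => exact congrArg (Option.bind · _) (letterAct_a_pow_apply (by simpa using hk) s)

lemma letterAct_a_pow_mul_b (hn : 1 ≤ n) :
    letterAct n .a ^ n * letterAct n .b = letterAct n .z := by
  obtain ⟨m, rfl⟩ : ∃ m, n = m + 1 := ⟨n - 1, by omega⟩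
  funext s
  cases s with
  | none => exact letterAct_pow_apply_none _ _
  | some s =>
    rw [pow_succ', mul_assoc, letterAct_mul_apply]
    show ((letterAct _ .a ^ m) (some (some 0 :: s))).bind _ = none
    rw [letterAct_a_pow_apply (by omega)]
    simp [stackStep]

lemma letterAct_mul_z (l : Letter) : letterAct n l * letterAct n .z = letterAct n .z := by
  funext s; cases s <;> rfl

lemma letterAct_z_mul (l : Letter) : letterAct n .z * letterAct n l = letterAct n .z := by
  funext s
  simp only [letterAct_mul_apply, letterAct, stackStep_z, Option.bind_fun_none]

def wordAct (n : ℕ) : W →* Function.End (Option Stack) := FreeMonoid.lift (letterAct n)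

lemma relM_le_ker (hn : 1 ≤ n) : relM n ≤ Con.ker (wordAct n) := by
  intro x y h
  rw [Con.ker_rel]
  rcases h with ⟨rfl, rfl⟩ | ⟨rfl, rfl⟩ | ⟨rfl, rfl⟩ | ⟨rfl, rfl⟩ | ⟨k, hk1, hk2, rfl, rfl⟩ |
    ⟨l, rfl, rfl⟩ | ⟨l, rfl, rfl⟩ <;>
    simp only [wordAct, map_mul, map_pow, FreeMonoid.lift_eval_of, A, B, C, D, Z, map_one]
  · exact letterAct_a_pow_mul_b hn
  · exact letterAct_a_mul_c
  · simpa using letterAct_d_mul_a_pow_mul_b (k := 0) (by omega)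
  · exact letterAct_d_mul_c
  · exact letterAct_d_mul_a_pow_mul_b (by omega)
  · exact letterAct_mul_z l
  · exact letterAct_z_mul l

def toEnd (hn : 1 ≤ n) : M n →* Function.End (Option Stack) :=
  (Mcon n).lift (wordAct n) (Con.conGen_le.mpr (relM_le_ker hn))

theorem Z_ne_one (hn : 1 ≤ n) : (Z : M n) ≠ 1 := by
  intro h
  have : (none : Option Stack) = some [] := congrArg (fun x => toEnd hn x (some [])) h
  exact Option.some_ne_none _ this.symm

lemma coe_eq_of_relM {x y : W} (h : relM n x y) : (x : M n) = y :=
  (Mcon n).eq.mpr (ConGen.Rel.of _ _ h)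

lemma coe_pow (x : W) (m : ℕ) : ((x ^ m : W) : M n) = (x : M n) ^ m :=
  map_pow (Mcon n).mk' x m

lemma A_pow_mul_B : (A : M n) ^ n * B = Z := by
  rw [← coe_pow, ← Con.coe_mul]
  exact coe_eq_of_relM (Or.inl ⟨rfl, rfl⟩)

lemma A_mul_C : (A : M n) * C = 1 := by
  rw [← Con.coe_mul]
  exact coe_eq_of_relM (Or.inr (Or.inl ⟨rfl, rfl⟩))

lemma D_mul_C : (D : M n) * C = 1 := by
  rw [← Con.coe_mul]
  exact coe_eq_of_relM (Or.inr (Or.inr (Or.inr (Or.inl ⟨rfl, rfl⟩))))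

lemma D_mul_A_pow_mul_B {k : ℕ} (hk : k < n) : (D : M n) * A ^ k * B = 1 := by
  rcases Nat.eq_zero_or_pos k with rfl | hk0
  · rw [pow_zero, mul_one, ← Con.coe_mul]
    exact coe_eq_of_relM (Or.inr (Or.inr (Or.inl ⟨rfl, rfl⟩)))
  · rw [← coe_pow, ← Con.coe_mul, ← Con.coe_mul]
    exact coe_eq_of_relM (Or.inr (Or.inr (Or.inr (Or.inr (Or.inl ⟨k, hk0, by omega, rfl, rfl⟩)))))

lemma of_mul_Z (l : Letter) : ((FreeMonoid.of l : W) : M n) * Z = Z := by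
  rw [← Con.coe_mul]
  exact coe_eq_of_relM (Or.inr (Or.inr (Or.inr (Or.inr (Or.inr (Or.inl ⟨l, rfl, rfl⟩))))))

lemma Z_mul_of (l : Letter) : (Z : M n) * (FreeMonoid.of l : W) = Z := by
  rw [← Con.coe_mul]
  exact coe_eq_of_relM (Or.inr (Or.inr (Or.inr (Or.inr (Or.inr (Or.inr ⟨l, rfl, rfl⟩))))))

@[elab_as_elim]
theorem induction_on {p : M n → Prop} (x : M n) (one : p 1)
    (of_mul : ∀ l y, p y → p (((FreeMonoid.of l : W) : M n) * y)) : p x := by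
  induction x using Con.induction_on with | H w => ?_
  induction w using FreeMonoid.inductionOn' with
  | one => exact one
  | of_mul l w ih => rw [Con.coe_mul]; exact of_mul l _ ih

lemma Z_mul (x : M n) : (Z : M n) * x = Z := by
  induction x using induction_on with
  | one => exact mul_one _
  | of_mul l y ih => rw [← mul_assoc, Z_mul_of, ih]

def pushFactor : Option (Fin n) → M n
  | none => C
  | some k => A ^ (k : ℕ) * B

def push (Q : List (Option (Fin n))) : M n := (Q.map pushFactor).prod

def pop (R : List Bool) : M n := (R.map fun b => if b then (A : M n) else D).prod

lemma push_cons (f : Option (Fin n)) (Q : List (Option (Fin n))) :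
    push (f :: Q) = pushFactor f * push Q := List.prod_cons

lemma pop_cons (b : Bool) (R : List Bool) :
    (pop (b :: R) : M n) = (if b then (A : M n) else D) * pop R := List.prod_cons

lemma D_mul_pushFactor (f : Option (Fin n)) : (D : M n) * pushFactor f = 1 := by
  cases f with
  | none => exact D_mul_C
  | some k => rw [pushFactor, ← mul_assoc]; exact D_mul_A_pow_mul_B k.isLt

lemma D_pow_mul_push (Q : List (Option (Fin n))) : (D : M n) ^ Q.length * push Q = 1 := by
  induction Q with
  | nil => exact mul_one _
  | cons f Q ih =>
    rw [List.length_cons, pow_succ, push_cons, mul_assoc, ← mul_assoc (D : M n),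
      D_mul_pushFactor, one_mul, ih]

lemma pop_mul_C_pow (R : List Bool) : (pop R : M n) * C ^ R.length = 1 := by
  induction R with
  | nil => exact mul_one _
  | cons b R ih =>
    rw [List.length_cons, pow_succ, pop_cons, ← mul_assoc, mul_assoc _ (pop R), ih, mul_one]
    cases b
    · exact D_mul_C
    · exact A_mul_C

def IsNormal (x : M n) : Prop := ∃ Q R, x = push Q * pop R

namespace IsNormal

variable {x : M n}

lemma A_mul (hx : IsNormal x) : (A : M n) * x = Z ∨ IsNormal ((A : M n) * x) := by
  obtain ⟨Q, R, rfl⟩ := hx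
  rcases Q with _ | ⟨_ | k, Q⟩
  · refine Or.inr ⟨[], true :: R, ?_⟩
    rw [pop_cons, push, List.map_nil, List.prod_nil, one_mul, one_mul, if_pos rfl]
  · refine Or.inr ⟨Q, R, ?_⟩
    rw [push_cons, pushFactor, ← mul_assoc, ← mul_assoc, A_mul_C, one_mul]
  · by_cases hk : (k : ℕ) + 1 < n
    · refine Or.inr ⟨some ⟨k + 1, hk⟩ :: Q, R, ?_⟩
      simp only [push_cons, pushFactor, pow_succ', mul_assoc]
    · left
      have hkn : (k : ℕ) + 1 = n := by omega
      rw [push_cons, pushFactor, ← mul_assoc, ← mul_assoc, ← mul_assoc, ← pow_succ', hkn,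
        A_pow_mul_B, mul_assoc, Z_mul]

lemma B_mul (hn : 1 ≤ n) (hx : IsNormal x) : IsNormal ((B : M n) * x) := by
  obtain ⟨Q, R, rfl⟩ := hx
  refine ⟨some ⟨0, hn⟩ :: Q, R, ?_⟩
  rw [push_cons, pushFactor, pow_zero, one_mul, mul_assoc]

lemma C_mul (hx : IsNormal x) : IsNormal ((C : M n) * x) := by
  obtain ⟨Q, R, rfl⟩ := hx
  exact ⟨none :: Q, R, by rw [push_cons, pushFactor, mul_assoc]⟩

lemma D_mul (hx : IsNormal x) : IsNormal ((D : M n) * x) := by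
  obtain ⟨Q, R, rfl⟩ := hx
  rcases Q with _ | ⟨f, Q⟩
  · refine ⟨[], false :: R, ?_⟩
    rw [pop_cons, push, List.map_nil, List.prod_nil, one_mul, one_mul, if_neg Bool.false_ne_true]
  · refine ⟨Q, R, ?_⟩
    rw [push_cons, ← mul_assoc, ← mul_assoc, D_mul_pushFactor, one_mul]

lemma exists_mul_mul_eq_one (hx : IsNormal x) : ∃ u v : M n, u * x * v = 1 := by
  obtain ⟨Q, R, rfl⟩ := hx
  refine ⟨D ^ Q.length, C ^ R.length, ?_⟩
  rw [← mul_assoc, D_pow_mul_push, one_mul, pop_mul_C_pow]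

end IsNormal

lemma eq_Z_or_isNormal (hn : 1 ≤ n) (x : M n) : x = Z ∨ IsNormal x := by
  induction x using induction_on with
  | one => exact Or.inr ⟨[], [], (mul_one _).symm⟩
  | of_mul l y ih =>
    rcases ih with rfl | hy
    · exact Or.inl (of_mul_Z l)
    · cases l
      · exact hy.A_mul
      · exact Or.inr (hy.B_mul hn)
      · exact Or.inr hy.C_mul
      · exact Or.inr hy.D_mul
      · exact Or.inl (Z_mul _)

end M

/-- `M n` is `0`-simple: it is nontrivial and for every nonzero `w` the
two-sided ideal `M w M` is all of `M`. -/
theorem stmt4 (n : ℕ) (hn : 1 ≤ n) :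
    (Z : M n) ≠ 1 ∧
      ∀ w : M n, w ≠ (Z : M n) → ∀ x : M n, ∃ u v : M n, u * w * v = x := by
  refine ⟨M.Z_ne_one hn, fun w hw x => ?_⟩
  obtain ⟨u, v, h⟩ := ((M.eq_Z_or_isNormal hn w).resolve_left hw).exists_mul_mul_eq_one
  exact ⟨x * u, v, by rw [mul_assoc x, mul_assoc x, h, mul_one]⟩
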